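/- Let X be a compact metric space, f_{0,∞} a sequence of continuous self-maps, k ≥ 1, and A = {k^i}_{i=1}^∞. Then h_A(f_{0,∞}^{k^n}) = h_A(f_{0,∞}) for every n ≥ 1, where f_{0,∞}^{m} denotes the m-th compositions system. -/

import Mathlib

open Filter Set MeasureTheory

/-- `nacomp f i n = f (i+n-1) ∘ ⋯ ∘ f i`, the `n`-fold composition of the
nonautonomous system starting at index `i`. -/
def nacomp {X : Type*} (f : ℕ → X → X) (i : ℕ) : ℕ → X → X
  | 0 => id
  | n + 1 => f (i + n) ∘ nacomp f i n

/-- `E` is an `(n, ε, A)`-separated subset of `Λ` for the nonautonomous system `f`. -/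
def IsSepSet {X : Type*} [PseudoMetricSpace X] (f : ℕ → X → X) (A : ℕ → ℕ) (n : ℕ)
    (ε : ℝ) (Λ : Set X) (E : Finset X) : Prop :=
  ↑E ⊆ Λ ∧ ∀ x ∈ E, ∀ y ∈ E, x ≠ y →
    ∃ j : Fin n, ε < dist (nacomp f 0 (A j) x) (nacomp f 0 (A j) y)

/-- `s_n(ε, A, f, Λ)`: maximal cardinality of an `(n,ε,A)`-separated subset of `Λ`. -/
noncomputable def maxSep {X : Type*} [PseudoMetricSpace X] (f : ℕ → X → X) (A : ℕ → ℕ)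
    (n : ℕ) (ε : ℝ) (Λ : Set X) : ℕ :=
  sSup {m | ∃ E : Finset X, IsSepSet f A n ε Λ E ∧ E.card = m}

/-- Topological sequence entropy of `f` on `Λ` along `A`, via separated sets:
`lim_{ε → 0} limsup_n (1/n) log s_n(ε,A,f,Λ)`, the limit realized as a supremum over `ε > 0`. -/
noncomputable def sepEnt {X : Type*} [PseudoMetricSpace X] (f : ℕ → X → X) (A : ℕ → ℕ)
    (Λ : Set X) : EReal :=
  ⨆ ε : {ε : ℝ // 0 < ε},
    limsup (fun n : ℕ => ((Real.log (maxSep f A n ε Λ) / n : ℝ) : EReal)) atTop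

/-- A finite open cover of the whole space. -/
def IsFinOpenCover {X : Type*} [TopologicalSpace X] (𝒜 : Finset (Set X)) : Prop :=
  (∀ u ∈ 𝒜, IsOpen u) ∧ ⋃₀ ↑𝒜 = (univ : Set X)

/-- A cell `⋂_j (f_0^{a_j})⁻¹ (u j)` of the join `⋁_{j} f_0^{-a_j} 𝒜`. -/
def seqCell {X : Type*} (f : ℕ → X → X) (A : ℕ → ℕ) (n : ℕ) (u : Fin n → Set X) : Set X :=
  ⋂ j : Fin n, nacomp f 0 (A j.1) ⁻¹' (u j)

/-- `N((⋁_{j=1}^n f_0^{-a_j} 𝒜)|_Λ)`: the minimal cardinality of a subfamily of the join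
cover whose union contains `Λ`. -/
noncomputable def coverN {X : Type*} (f : ℕ → X → X) (A : ℕ → ℕ) (n : ℕ) (Λ : Set X)
    (𝒜 : Finset (Set X)) : ℕ :=
  sInf {m | ∃ S : Finset (Fin n → Set X), (∀ u ∈ S, ∀ j, u j ∈ 𝒜) ∧
    (Λ ⊆ ⋃ u ∈ S, seqCell f A n u) ∧ S.card = m}

/-- `h_A(f, Λ, 𝒜)`, the sequence entropy of `f` on `Λ` relative to the open cover `𝒜`. -/
noncomputable def coverEntOf {X : Type*} (f : ℕ → X → X) (A : ℕ → ℕ) (Λ : Set X)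
    (𝒜 : Finset (Set X)) : EReal :=
  limsup (fun n : ℕ => ((Real.log (coverN f A n Λ 𝒜) / n : ℝ) : EReal)) atTop

/-- `h_A(f, Λ)`: topological sequence entropy via open covers. -/
noncomputable def coverEnt {X : Type*} [TopologicalSpace X] (f : ℕ → X → X) (A : ℕ → ℕ)
    (Λ : Set X) : EReal :=
  ⨆ 𝒜 : {𝒜 : Finset (Set X) // IsFinOpenCover 𝒜}, coverEntOf f A Λ 𝒜

/-- The supremum topological sequence entropy `h*(f) = sup_A h_A(f)`. -/
noncomputable def supSeqEnt {X : Type*} [PseudoMetricSpace X] (f : ℕ → X → X) : EReal :=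
  ⨆ A : {A : ℕ → ℕ // StrictMono A}, sepEnt f A univ

/-- The `n`-th compositions system `f_{0,∞}^n`, whose `k`-th map is `f_{kn}^n`. -/
def compSys {X : Type*} (f : ℕ → X → X) (n : ℕ) : ℕ → X → X :=
  fun k => nacomp f (k * n) n

/-- A finite measurable partition of the space. -/
def IsFinMeasPartition {X : Type*} [MeasurableSpace X] (P : Finset (Set X)) : Prop :=
  (∀ s ∈ P, MeasurableSet s) ∧ ((P : Set (Set X)).PairwiseDisjoint id) ∧
    ⋃₀ ↑P = (univ : Set X)

/-- `h_{A,μ}(f, P) = limsup (1/n) H_μ(⋁_{j=1}^n f_0^{-a_j} P)`. -/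
noncomputable def measSeqEntPart {X : Type*} [MeasurableSpace X] (μ : Measure X)
    (f : ℕ → X → X) (A : ℕ → ℕ) (P : Finset (Set X)) : EReal :=
  limsup (fun n : ℕ =>
    (((∑ u : Fin n → {s // s ∈ P},
        Real.negMulLog (μ (seqCell f A n (fun j => (u j : Set X)))).toReal) / n : ℝ) : EReal))
    atTop

/-- The measure-theoretic sequence entropy `h_{A,μ}(f)`. -/
noncomputable def measSeqEnt {X : Type*} [MeasurableSpace X] (μ : Measure X)
    (f : ℕ → X → X) (A : ℕ → ℕ) : EReal :=
  ⨆ P : {P : Finset (Set X) // IsFinMeasPartition P}, measSeqEntPart μ f A P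

/-- Covering dimension at most `d`: every finite open cover has a finite open refinement
of order at most `d + 1`. -/
def HasCovDimLE (X : Type*) [TopologicalSpace X] (d : ℕ) : Prop :=
  ∀ 𝒜 : Finset (Set X), IsFinOpenCover 𝒜 → ∃ ℬ : Finset (Set X), IsFinOpenCover ℬ ∧
    (∀ v ∈ ℬ, ∃ u ∈ 𝒜, v ⊆ u) ∧ ∀ x : X, ({v : Set X | v ∈ ℬ ∧ x ∈ v}).ncard ≤ d + 1

/-- The induced nonautonomous system `f̂` on the space of Borel probability measures,
carrying the Lévy–Prokhorov (Prohorov) metric: `f̂ n μ = (f n)_* μ`. -/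
noncomputable def inducedSys {X : Type*} [MeasurableSpace X] (f : ℕ → X → X)
    (hf : ∀ n, Measurable (f n)) :
    ℕ → LevyProkhorov (ProbabilityMeasure X) → LevyProkhorov (ProbabilityMeasure X) :=
  fun n μ => (LevyProkhorov.toMeasureEquiv (α := ProbabilityMeasure X)).symm
    (((LevyProkhorov.toMeasureEquiv (α := ProbabilityMeasure X)) μ).map (hf n).aemeasurable)

/-- Multi-sensitivity of a nonautonomous system. -/
def MultiSensitive {X : Type*} [PseudoMetricSpace X] (f : ℕ → X → X) : Prop :=
  ∃ δ : ℝ, 0 < δ ∧ ∀ (k : ℕ) (V : Fin k → Set X),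
    (∀ i, IsOpen (V i)) → (∀ i, (V i).Nonempty) →
      ∃ n : ℕ, 1 ≤ n ∧ ∀ i, δ < Metric.diam (nacomp f 0 n '' V i)

/-!
Blocks of `m` maps of `f` are single maps of the `m`-th compositions system, so `h_A(f^m)` is
`h_{mA}(f)`; for `A = (k^(i+1))` and `m = k^n` the sequence `mA` is `A` shifted by `n`.
Sequence entropy is shift invariant: an `ε`-separated set along `a_1, …, a_{N+n}` is cut into
boundedly many classes (by uniform continuity of the first `n` maps, on a compact space), each
of which is `ε`-separated along `a_{n+1}, …, a_{N+n}`. So the separation numbers of `A` and of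
its shift differ by at most a constant factor and a shift of the index, neither of which
changes the exponential growth rate.
-/

lemma nacomp_continuous {X : Type*} [TopologicalSpace X] {f : ℕ → X → X}
    (hf : ∀ m, Continuous (f m)) (i j : ℕ) : Continuous (nacomp f i j) := by
  induction j with
  | zero => exact continuous_id
  | succ j ih => exact (hf _).comp ih

lemma nacomp_add {X : Type*} (f : ℕ → X → X) (i a b : ℕ) :
    nacomp f i (a + b) = nacomp f (i + a) b ∘ nacomp f i a := by
  induction b with
  | zero => rfl
  | succ b ih => rw [← Nat.add_assoc, nacomp, nacomp, ih, ← Nat.add_assoc]; rfl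

lemma nacomp_compSys {X : Type*} (f : ℕ → X → X) (m j : ℕ) :
    nacomp (compSys f m) 0 j = nacomp f 0 (j * m) := by
  induction j with
  | zero => rw [Nat.zero_mul]; rfl
  | succ j ih =>
    rw [Nat.succ_mul, nacomp_add f 0 (j * m) m, ← ih]
    simp [nacomp, compSys]

lemma exists_fin_fibres_dist_lt {X Y : Type*} [PseudoMetricSpace X] [CompactSpace X]
    [PseudoMetricSpace Y] {G : X → Y} (hG : Continuous G) {ε : ℝ} (hε : 0 < ε) :
    ∃ (C : ℕ) (φ : X → Fin C), ∀ x y, φ x = φ y → dist (G x) (G y) < ε := by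
  have hGu : UniformContinuous G := CompactSpace.uniformContinuous_of_continuous hG
  obtain ⟨δ, hδ, hδε⟩ := Metric.uniformContinuous_iff.mp hGu ε hε
  obtain ⟨t, -, ht, hcover⟩ :=
    finite_cover_balls_of_compact (isCompact_univ (X := X)) (half_pos hδ)
  have hcenter : ∀ x : X, ∃ c : t, dist x c < δ / 2 := fun x => by
    obtain ⟨c, hct, hc⟩ := mem_iUnion₂.1 (hcover (mem_univ x))
    exact ⟨⟨c, hct⟩, hc⟩
  choose center hcenter using hcenter
  have := ht.to_subtype
  obtain ⟨C, ⟨e⟩⟩ := Finite.exists_equiv_fin t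
  refine ⟨C, e ∘ center, fun x y hxy => hδε ?_⟩
  have hxy : center x = center y := e.injective hxy
  calc dist x y ≤ dist x (center x) + dist y (center x) := dist_triangle_right _ _ _
    _ < δ / 2 + δ / 2 := add_lt_add (hcenter x) (by rw [hxy]; exact hcenter y)
    _ = δ := add_halves δ

lemma Finset.card_le_mul_of_fibres_card_le {α : Type*} {C K : ℕ} (φ : α → Fin C)
    (E : Finset α) (h : ∀ c, (E.filter (φ · = c)).card ≤ K) : E.card ≤ K * C := by
  simpa using Finset.card_le_mul_card_image_of_maps_to (t := Finset.univ)
    (fun a _ => Finset.mem_univ (φ a)) K fun c _ => h c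

section Separated

variable {X : Type*} [PseudoMetricSpace X] {f : ℕ → X → X} {A : ℕ → ℕ} {ε : ℝ} {Λ : Set X}

lemma maxSep_le {N K : ℕ} (h : ∀ E : Finset X, IsSepSet f A N ε Λ E → E.card ≤ K) :
    maxSep f A N ε Λ ≤ K :=
  csSup_le ⟨0, ∅, ⟨by simp, by simp⟩, rfl⟩ fun _ ⟨E, hE, hcard⟩ => hcard ▸ h E hE

lemma maxSep_empty (N : ℕ) : maxSep f A N ε ∅ = 0 :=
  Nat.le_zero.1 <| maxSep_le fun _ hE => by
    simpa [Finset.eq_empty_iff_forall_notMem] using hE.1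

variable [CompactSpace X]

lemma exists_fin_fibres_dist_nacomp_lt (hf : ∀ m, Continuous (f m)) (N : ℕ) (hε : 0 < ε) :
    ∃ (C : ℕ) (φ : X → Fin C), ∀ x y, φ x = φ y →
      ∀ j : Fin N, dist (nacomp f 0 (A j) x) (nacomp f 0 (A j) y) < ε := by
  obtain ⟨C, φ, hφ⟩ := exists_fin_fibres_dist_lt
    (continuous_pi fun j : Fin N => nacomp_continuous hf 0 (A j)) hε
  exact ⟨C, φ, fun x y hxy j => (dist_le_pi_dist _ _ j).trans_lt (hφ x y hxy)⟩

lemma bddAbove_card_isSepSet (hf : ∀ m, Continuous (f m)) (N : ℕ) (hε : 0 < ε) :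
    BddAbove {m | ∃ E : Finset X, IsSepSet f A N ε Λ E ∧ E.card = m} := by
  classical
  obtain ⟨C, φ, hφ⟩ := exists_fin_fibres_dist_nacomp_lt (A := A) hf N hε
  refine ⟨1 * C, ?_⟩
  rintro _ ⟨E, hE, rfl⟩
  refine E.card_le_mul_of_fibres_card_le φ fun c => Finset.card_le_one.2 fun x hx y hy => ?_
  rw [Finset.mem_filter] at hx hy
  by_contra hne
  obtain ⟨j, hj⟩ := hE.2 x hx.1 y hy.1 hne
  exact hj.not_gt (hφ x y (hx.2.trans hy.2.symm) j)

lemma IsSepSet.card_le_maxSep (hf : ∀ m, Continuous (f m)) (hε : 0 < ε) {N : ℕ}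
    {E : Finset X} (hE : IsSepSet f A N ε Λ E) : E.card ≤ maxSep f A N ε Λ :=
  le_csSup (bddAbove_card_isSepSet hf N hε) ⟨E, hE, rfl⟩

lemma maxSep_pos (hf : ∀ m, Continuous (f m)) (hε : 0 < ε) (hΛ : Λ.Nonempty) (N : ℕ) :
    0 < maxSep f A N ε Λ := by
  obtain ⟨x, hx⟩ := hΛ
  have hsep : IsSepSet f A N ε Λ {x} := ⟨by simpa using hx, by simp⟩
  have hcard := hsep.card_le_maxSep hf hε
  rwa [Finset.card_singleton] at hcard

lemma monotone_maxSep (hf : ∀ m, Continuous (f m)) (hε : 0 < ε) :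
    Monotone fun N => maxSep f A N ε Λ := fun _ _ hNN' =>
  maxSep_le fun _ hE => IsSepSet.card_le_maxSep hf hε
    ⟨hE.1, fun x hx y hy hxy => (hE.2 x hx y hy hxy).imp' (Fin.castLE hNN') fun _ => id⟩

lemma maxSep_shift_le (hf : ∀ m, Continuous (f m)) (hε : 0 < ε) (n m : ℕ) :
    maxSep f (fun i => A (i + n)) m ε Λ ≤ maxSep f A (m + n) ε Λ :=
  maxSep_le fun _ hE => IsSepSet.card_le_maxSep hf hε
    ⟨hE.1, fun x hx y hy hxy => (hE.2 x hx y hy hxy).imp'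
      (fun j : Fin m => (⟨j + n, by omega⟩ : Fin (m + n))) fun _ => id⟩

lemma exists_maxSep_add_le_mul (hf : ∀ m, Continuous (f m)) (hε : 0 < ε) (n : ℕ) :
    ∃ C : ℕ, ∀ m, maxSep f A (m + n) ε Λ ≤ C * maxSep f (fun i => A (i + n)) m ε Λ := by
  classical
  obtain ⟨C, φ, hφ⟩ := exists_fin_fibres_dist_nacomp_lt (A := A) hf n hε
  refine ⟨C, fun m => maxSep_le fun E hE => ?_⟩
  rw [mul_comm]
  refine E.card_le_mul_of_fibres_card_le φ fun c =>
    IsSepSet.card_le_maxSep hf hε ⟨fun x hx => hE.1 (Finset.mem_filter.1 hx).1, ?_⟩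
  intro x hx y hy hxy
  rw [Finset.mem_filter] at hx hy
  obtain ⟨j, hj⟩ := hE.2 x hx.1 y hy.1 hxy
  have hjn : n ≤ j := by
    by_contra! hjn
    exact hj.not_gt (hφ x y (hx.2.trans hy.2.symm) ⟨j, hjn⟩)
  exact ⟨⟨j - n, by omega⟩, by simpa [Nat.sub_add_cancel hjn] using hj⟩

end Separated

open ExpGrowth

lemma limsup_log_div_eq_expGrowthSup {s : ℕ → ℕ} (hs : ∀ m, s m ≠ 0) :
    limsup (fun m : ℕ => ((Real.log (s m) / m : ℝ) : EReal)) atTop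
      = expGrowthSup fun m => (s m : ENNReal) := by
  rw [expGrowthSup]
  congr 1
  funext m
  rw [EReal.coe_div, ENNReal.log_pos_real (by simpa using hs m) (ENNReal.natCast_ne_top _)]
  rfl

lemma Monotone.expGrowthSup_comp_add {u : ℕ → ENNReal} (hu : Monotone u) (n : ℕ) :
    expGrowthSup (fun m => u (m + n)) = expGrowthSup u := by
  have hlim : Tendsto (fun m : ℕ => ((m + n : ℕ) : EReal) / m) atTop (nhds 1) := by
    have hreal : Tendsto (fun m : ℕ => ((m + n : ℕ) : ℝ) / m) atTop (nhds 1) := by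
      have h := (tendsto_const_div_atTop_nhds_zero_nat (n : ℝ)).const_add 1
      rw [add_zero] at h
      refine h.congr' ((eventually_ne_atTop 0).mono fun m hm => ?_)
      dsimp only
      rw [Nat.cast_add, add_div, div_self (Nat.cast_ne_zero.2 hm)]
    exact EReal.tendsto_coe.2 hreal
  exact (hu.expGrowthSup_comp (v := fun m => m + n) hlim one_ne_zero (EReal.coe_ne_top 1)).trans
    (one_mul _)

theorem sepEnt_shift {X : Type*} [PseudoMetricSpace X] [CompactSpace X] {f : ℕ → X → X}
    (hf : ∀ m, Continuous (f m)) (A : ℕ → ℕ) (n : ℕ) (Λ : Set X) :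
    sepEnt f (fun i => A (i + n)) Λ = sepEnt f A Λ := by
  rcases Λ.eq_empty_or_nonempty with rfl | hΛ
  · simp only [sepEnt, maxSep_empty]
  refine iSup_congr fun ⟨ε, hε⟩ => ?_
  have hmono : Monotone fun m => (maxSep f A m ε Λ : ENNReal) := fun _ _ h =>
    Nat.mono_cast (monotone_maxSep hf hε h)
  rw [limsup_log_div_eq_expGrowthSup fun m => (maxSep_pos hf hε hΛ m).ne',
    limsup_log_div_eq_expGrowthSup fun m => (maxSep_pos hf hε hΛ m).ne',
    ← hmono.expGrowthSup_comp_add n]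
  obtain ⟨C, hC⟩ := exists_maxSep_add_le_mul (A := A) (Λ := Λ) hf hε n
  refine le_antisymm (expGrowthSup_monotone fun m => ?_)
    (expGrowthSup_le_of_eventually_le (ENNReal.natCast_ne_top C) (.of_forall fun m => ?_))
  · exact Nat.mono_cast (maxSep_shift_le hf hε n m)
  · exact_mod_cast hC m

theorem sepEnt_compSys {X : Type*} [PseudoMetricSpace X] (f : ℕ → X → X) (m : ℕ) (A : ℕ → ℕ)
    (Λ : Set X) : sepEnt (compSys f m) A Λ = sepEnt f (fun i => A i * m) Λ := by
  simp only [sepEnt, maxSep, IsSepSet, nacomp_compSys]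

theorem sepEnt_compSys_pow_general {X : Type*} [MetricSpace X] [CompactSpace X]
    (f : ℕ → X → X) (hf : ∀ m, Continuous (f m))
    (k : ℕ) (n : ℕ) :
    sepEnt (compSys f (k ^ n)) (fun i => k ^ (i + 1)) univ
      = sepEnt f (fun i => k ^ (i + 1)) univ := by
  rw [sepEnt_compSys, ← sepEnt_shift hf (fun i => k ^ (i + 1)) n]
  congr 1
  funext i
  ring

/-- For the sequence `A = {k^i}`, `h_A(f_{0,∞}^{k^n}) = h_A(f_{0,∞})`. -/
theorem sepEnt_compSys_pow {X : Type*} [MetricSpace X] [CompactSpace X]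
    (f : ℕ → X → X) (hf : ∀ m, Continuous (f m))
    (k : ℕ) (hk : 1 ≤ k) (n : ℕ) (hn : 1 ≤ n) :
    sepEnt (compSys f (k ^ n)) (fun i => k ^ (i + 1)) univ
      = sepEnt f (fun i => k ^ (i + 1)) univ :=
  sepEnt_compSys_pow_general f hf k n
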